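/- Let J2 ⊂ ℂ[x0,...,x8] be the ideal generated by the 12 monomials x_i x_{i+2} (i ∈ ℤ/9) and x_i x_{i+3} x_{i+6} (i ∈ ℤ/9), indices mod 9. Then the common zero locus of J2 in ℂ^9 equals the union ⋃_{i ∈ ℤ/9} L_i, where L_i = {x ∈ ℂ^9 : x_i = x_{i+1} = x_{i+4} = x_{i+5} = x_{i+8} = 0} (indices mod 9); i.e. the projectivized zero locus of J2 is the union of the nine 3-planes σ^i(L_0) ⊂ P^8, where σ is the cyclic coordinate shift and L_0 = {x0 = x1 = x4 = x5 = x8 = 0}. -/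
import Mathlib


open MvPolynomial

/-- The ideal `J₂ ⊂ ℂ[x0,…,x8]` generated by the 12 monomials `x_i x_{i+2}` and
`x_i x_{i+3} x_{i+6}` (indices mod 9). -/
noncomputable def idealJ2 : Ideal (MvPolynomial (Fin 9) ℂ) :=
  Ideal.span
    ((Set.range fun i : Fin 9 => X i * X (i + 2)) ∪
     (Set.range fun i : Fin 9 => X i * X (i + 3) * X (i + 6)))

set_option maxRecDepth 10000 in
lemma key_comb : ∀ b : Fin 9 → Bool,
    (∀ j, b j = false ∨ b (j+2) = false) →
    (∀ j, b j = false ∨ b (j+3) = false ∨ b (j+6) = false) →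
    ∃ i, b i = false ∧ b (i+1) = false ∧ b (i+4) = false ∧ b (i+5) = false ∧ b (i+8) = false := by
  decide

lemma hit2 : ∀ i j : Fin 9,
    j = i ∨ j = i+1 ∨ j = i+4 ∨ j = i+5 ∨ j = i+8 ∨
    j+2 = i ∨ j+2 = i+1 ∨ j+2 = i+4 ∨ j+2 = i+5 ∨ j+2 = i+8 := by
  decide

lemma hit3 : ∀ i j : Fin 9,
    j = i ∨ j = i+1 ∨ j = i+4 ∨ j = i+5 ∨ j = i+8 ∨
    j+3 = i ∨ j+3 = i+1 ∨ j+3 = i+4 ∨ j+3 = i+5 ∨ j+3 = i+8 ∨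
    j+6 = i ∨ j+6 = i+1 ∨ j+6 = i+4 ∨ j+6 = i+5 ∨ j+6 = i+8 := by
  decide

/-- The zero locus of `J₂` in `ℂ⁹` is the union of the nine coordinate 4-planes
`L_i = {x_i = x_{i+1} = x_{i+4} = x_{i+5} = x_{i+8} = 0}` (indices mod 9),
i.e. projectively the nine 3-planes `σ^i(L₀) ⊂ P⁸`. -/
theorem zeroLocus_J2 :
    {x : Fin 9 → ℂ | ∀ f ∈ idealJ2, eval x f = 0} =
      ⋃ i : Fin 9,
        {x : Fin 9 → ℂ |
          x i = 0 ∧ x (i + 1) = 0 ∧ x (i + 4) = 0 ∧ x (i + 5) = 0 ∧ x (i + 8) = 0} := by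
  classical
  ext x
  simp only [Set.mem_setOf_eq, Set.mem_iUnion]
  constructor
  · intro hx
    have h2 : ∀ j : Fin 9, x j * x (j+2) = 0 := by
      intro j
      have := hx (X j * X (j+2))
        (Ideal.subset_span (Set.mem_union_left _ ⟨j, rfl⟩))
      simpa using this
    have h3 : ∀ j : Fin 9, x j * x (j+3) * x (j+6) = 0 := by
      intro j
      have := hx (X j * X (j+3) * X (j+6))
        (Ideal.subset_span (Set.mem_union_right _ ⟨j, rfl⟩))
      simpa using this
    set b : Fin 9 → Bool := fun j => if x j = 0 then false else true with hb
    have hbf : ∀ j, b j = false → x j = 0 := by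
      intro j h
      by_contra hc
      simp [hb, hc] at h
    have hbf' : ∀ j, x j = 0 → b j = false := by
      intro j h; simp [hb, h]
    obtain ⟨i, c0, c1, c4, c5, c8⟩ := key_comb b
      (fun j => by
        rcases mul_eq_zero.mp (h2 j) with h | h
        · exact Or.inl (hbf' _ h)
        · exact Or.inr (hbf' _ h))
      (fun j => by
        rcases mul_eq_zero.mp (h3 j) with h | h
        · rcases mul_eq_zero.mp h with h' | h'
          · exact Or.inl (hbf' _ h')
          · exact Or.inr (Or.inl (hbf' _ h'))
        · exact Or.inr (Or.inr (hbf' _ h)))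
    exact ⟨i, hbf _ c0, hbf _ c1, hbf _ c4, hbf _ c5, hbf _ c8⟩
  · rintro ⟨i, h0, h1, h4, h5, h8⟩
    intro f hf
    have : idealJ2 ≤ RingHom.ker (eval x) := by
      rw [idealJ2, Ideal.span_le]
      rintro g (⟨j, rfl⟩ | ⟨j, rfl⟩)
      · simp only [SetLike.mem_coe, RingHom.mem_ker, map_mul, eval_X]
        rcases hit2 i j with h | h | h | h | h | h | h | h | h | h <;>
          first
          | (rw [h]; simp [h0, h1, h4, h5, h8])
          | (rw [show x (j+2) = 0 from h ▸ (by first | exact h0 | exact h1 | exact h4 | exact h5 | exact h8)]; ring)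
      · simp only [SetLike.mem_coe, RingHom.mem_ker, map_mul, eval_X]
        rcases hit3 i j with h | h | h | h | h | h | h | h | h | h | h | h | h | h | h <;>
          first
          | (rw [h]; simp [h0, h1, h4, h5, h8])
          | (rw [show x (j+3) = 0 from h ▸ (by first | exact h0 | exact h1 | exact h4 | exact h5 | exact h8)]; ring)
          | (rw [show x (j+6) = 0 from h ▸ (by first | exact h0 | exact h1 | exact h4 | exact h5 | exact h8)]; ring)
    exact this hf
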